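/- Let A and Â be n×m real matrices and let k ≤ min(n,m). Suppose ‖Â − A‖ ≤ ε with ε < σ_k(A)/12. Let (Û, D̂, V̂) be a rank-k truncated SVD of Â and let Ŵ = Û D̂⁻¹. Then the k×k matrix M := Ŵᵀ A Aᵀ Ŵ is symmetric positive definite, and ‖I_k − M^{1/2}‖ ≤ 6ε/σ_k(A) and ‖I_k − M^{−1/2}‖ ≤ 12ε/σ_k(A). -/

import Mathlib

open Matrix

/-- The `j`-th largest singular value (1-indexed) of a real `n × m` matrix,
defined as the square root of the `j`-th largest eigenvalue of `Aᵀ * A`;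
it is `0` when `j = 0` or `j > m`. -/
noncomputable def sval {n m : ℕ} (A : Matrix (Fin n) (Fin m) ℝ) (j : ℕ) : ℝ :=
  if 1 ≤ j ∧ j ≤ m then
    (((Finset.univ.val.map fun i =>
        Real.sqrt ((show (Aᵀ * A).IsHermitian by
          simpa using Matrix.isHermitian_conjTranspose_mul_self A).eigenvalues i)).sort (· ≤ ·)).getD
      (m - j) 0)
  else 0

/-- The spectral norm (ℓ₂ operator norm) of a real matrix, i.e. its largest singular value. -/
noncomputable def matSpectralNorm {n m : ℕ} (A : Matrix (Fin n) (Fin m) ℝ) : ℝ := sval A 1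

/-- Euclidean norm of a vector. -/
noncomputable def evnorm {n : ℕ} (x : Fin n → ℝ) : ℝ := Real.sqrt (∑ i, (x i) ^ 2)

/-- `M^{1/2}`: the unique positive semidefinite square root of a positive semidefinite
real matrix (junk value `0` if `M` is not positive semidefinite). -/
noncomputable def msqrt {k : ℕ} (M : Matrix (Fin k) (Fin k) ℝ) : Matrix (Fin k) (Fin k) ℝ :=
  by classical exact if h : M.PosSemidef then
    h.1.eigenvectorUnitary.1 * diagonal ((↑) ∘ (√·) ∘ h.1.eigenvalues) *
      (star h.1.eigenvectorUnitary : Matrix (Fin k) (Fin k) ℝ) else 0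

/-!
Write `σ = σ_k(A)` and `σ' = σ_k(Â)`. Weyl's inequality `σ ≤ σ' + ε` keeps `σ'` away from zero,
so `‖Ŵ‖ ≤ 1/σ'`. Since `Ŵᵀ Â = V̂ᵀ`, we get `Ŵᵀ A = V̂ᵀ + F` with `F = Ŵᵀ (A − Â)` and
`‖F‖ ≤ ε/σ'`, hence `M = (V̂ᵀ + F)(V̂ᵀ + F)ᵀ` satisfies `‖I − M‖ ≤ 2‖F‖ + ‖F‖² ≤ 6ε/σ ≤ 1/2`.
So every eigenvalue `λ` of `M` has `|1 − λ| ≤ 6ε/σ`, whence `|1 − √λ| ≤ 6ε/σ` and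
`|1 − 1/√λ| ≤ 12ε/σ`; by the spectral theorem these bound the norms of `I − M^{1/2}` and
`I − M^{−1/2}`.
-/

open Module InnerProductSpace
open scoped Matrix.Norms.L2Operator

theorem Multiset.getD_sort_map_range_of_antitone {α : Type*} [LinearOrder α] {f : ℕ → α}
    (hf : Antitone f) {N j : ℕ} (hj : j < N) (d : α) :
    (((Multiset.range N).map f).sort (· ≤ ·)).getD (N - (j + 1)) d = f j := by
  have hsorted : ((List.range N).reverse.map f).Pairwise (· ≤ ·) := by
    rw [List.pairwise_map, List.pairwise_reverse]
    exact List.pairwise_lt_range.imp fun h => hf h.le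
  have hsort : ((Multiset.range N).map f).sort (· ≤ ·) = (List.range N).reverse.map f := by
    refine List.Perm.eq_of_pairwise' (Multiset.pairwise_sort _ _) hsorted ?_
    rw [← Multiset.coe_eq_coe, Multiset.sort_eq]
    exact (Multiset.coe_eq_coe.mpr ((List.reverse_perm _).map f)).symm
  rw [hsort, List.getD_eq_getElem _ _ (by simp; omega)]
  simp only [List.getElem_map, List.getElem_reverse, List.getElem_range, List.length_range]
  congr 1
  omega

theorem exists_ne_zero_forall_inner_eq_zero {𝕜 E : Type*} [RCLike 𝕜] [NormedAddCommGroup E]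
    [InnerProductSpace 𝕜 E] [FiniteDimensional 𝕜 E] {r : ℕ} (g : Fin r → E) (hr : r < finrank 𝕜 E) :
    ∃ v ≠ 0, ∀ i, ⟪g i, v⟫_𝕜 = 0 := by
  set K := Submodule.span 𝕜 (Set.range g)
  have hK : finrank 𝕜 K ≤ r := (finrank_range_le_card g).trans (Fintype.card_fin r).le
  have hKperp : Kᗮ ≠ ⊥ := by
    intro h
    have := K.finrank_add_finrank_orthogonal
    rw [h, finrank_bot] at this
    omega
  obtain ⟨v, hvK, hv0⟩ := Submodule.exists_mem_ne_zero_of_ne_bot hKperp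
  exact ⟨v, hv0, fun i => (Submodule.mem_orthogonal K v).mp hvK _
    (Submodule.subset_span (Set.mem_range_self i))⟩

namespace LinearMap

variable {𝕜 : Type*} [RCLike 𝕜]
  {E : Type*} [NormedAddCommGroup E] [InnerProductSpace 𝕜 E] [FiniteDimensional 𝕜 E]
  {F : Type*} [NormedAddCommGroup F] [InnerProductSpace 𝕜 F] [FiniteDimensional 𝕜 F]
  (T : E →ₗ[𝕜] F) {n : ℕ} (hn : finrank 𝕜 E = n)

noncomputable def rightSingularVectors : OrthonormalBasis (Fin n) 𝕜 E :=
  T.isSymmetric_adjoint_comp_self.eigenvectorBasis hn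

theorem norm_apply_sq_eq_sum (v : E) :
    ‖T v‖ ^ 2 = ∑ i : Fin n, T.singularValues i ^ 2 * ‖⟪T.rightSingularVectors hn i, v⟫_𝕜‖ ^ 2 := by
  set b := T.isSymmetric_adjoint_comp_self.eigenvectorBasis hn
  rw [← inner_self_eq_norm_sq (𝕜 := 𝕜), ← adjoint_inner_right, ← comp_apply,
    ← b.repr.inner_map_map, PiLp.inner_apply, map_sum]
  refine Finset.sum_congr rfl fun i _ => ?_
  rw [LinearMap.IsSymmetric.eigenvectorBasis_apply_self_apply,
    T.sq_singularValues_fin hn, RCLike.inner_apply, mul_assoc, RCLike.mul_conj, b.repr_apply_apply]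
  norm_cast

variable {T hn}

theorem singularValues_mul_norm_le_norm_apply {k : ℕ} {v : E}
    (hv : ∀ i : Fin n, k < i → ⟪T.rightSingularVectors hn i, v⟫_𝕜 = 0) :
    T.singularValues k * ‖v‖ ≤ ‖T v‖ := by
  rw [← pow_le_pow_iff_left₀ (by positivity [T.singularValues_nonneg k]) (norm_nonneg _)
    two_ne_zero, mul_pow, T.norm_apply_sq_eq_sum hn,
    ← (T.rightSingularVectors hn).sum_sq_norm_inner_right v, Finset.mul_sum]
  refine Finset.sum_le_sum fun i _ => ?_
  by_cases hik : k < i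
  · simp [hv i hik]
  · gcongr
    · exact T.singularValues_nonneg k
    · exact T.singularValues_antitone (not_lt.mp hik)

theorem norm_apply_le_singularValues_mul_norm {k : ℕ} {v : E}
    (hv : ∀ i : Fin n, i < k → ⟪T.rightSingularVectors hn i, v⟫_𝕜 = 0) :
    ‖T v‖ ≤ T.singularValues k * ‖v‖ := by
  rw [← pow_le_pow_iff_left₀ (norm_nonneg _) (by positivity [T.singularValues_nonneg k])
    two_ne_zero, mul_pow, T.norm_apply_sq_eq_sum hn,
    ← (T.rightSingularVectors hn).sum_sq_norm_inner_right v, Finset.mul_sum]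
  refine Finset.sum_le_sum fun i _ => ?_
  by_cases hik : i < k
  · simp [hv i hik]
  · gcongr
    · exact T.singularValues_nonneg i
    · exact T.singularValues_antitone (not_lt.mp hik)

theorem singularValues_le_add_of_norm_sub_apply_le (T T' : E →ₗ[𝕜] F) {c : ℝ} (hc : 0 ≤ c)
    (h : ∀ v, ‖(T - T') v‖ ≤ c * ‖v‖) (k : ℕ) :
    T.singularValues k ≤ T'.singularValues k + c := by
  set n := finrank 𝕜 E
  by_cases hk : k < n
  swap
  · rw [T.singularValues_of_finrank_le (not_lt.mp hk),
      T'.singularValues_of_finrank_le (not_lt.mp hk), zero_add]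
    exact hc
  set b := T.rightSingularVectors rfl
  set b' := T'.rightSingularVectors rfl
  -- `n - 1` orthogonality conditions: to the right singular vectors of `T` after index `k`
  -- and to those of `T'` before index `k`.
  let g : Fin (n - 1) → E := fun i =>
    if hi : (i : ℕ) < k then b' ⟨i, by omega⟩ else b ⟨i + 1, by omega⟩
  obtain ⟨v, hv0, hv⟩ := exists_ne_zero_forall_inner_eq_zero (𝕜 := 𝕜) g (by omega)
  have hb : ∀ i : Fin n, k < i → ⟪b i, v⟫_𝕜 = 0 := fun i hi => by
    simpa [g, show ¬ (i : ℕ) - 1 < k by omega, Nat.sub_add_cancel (show 1 ≤ (i : ℕ) by omega)]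
      using hv ⟨i - 1, by omega⟩
  have hb' : ∀ i : Fin n, i < k → ⟪b' i, v⟫_𝕜 = 0 := fun i hi => by
    simpa [g, hi] using hv ⟨i, by omega⟩
  have key : T.singularValues k * ‖v‖ ≤ (T'.singularValues k + c) * ‖v‖ :=
    calc T.singularValues k * ‖v‖ ≤ ‖T v‖ := singularValues_mul_norm_le_norm_apply hb
      _ ≤ ‖T' v‖ + ‖(T - T') v‖ := by
        simpa using norm_add_le (T' v) ((T - T') v)
      _ ≤ T'.singularValues k * ‖v‖ + c * ‖v‖ :=
        add_le_add (norm_apply_le_singularValues_mul_norm hb') (h v)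
      _ = (T'.singularValues k + c) * ‖v‖ := by ring
  exact le_of_mul_le_mul_right key (norm_pos_iff.mpr hv0)

theorem singularValues_zero_eq_opNorm (T : E →ₗ[𝕜] F) :
    T.singularValues 0 = ‖LinearMap.toContinuousLinearMap T‖ := by
  refine le_antisymm ?_ (ContinuousLinearMap.opNorm_le_bound _ (T.singularValues_nonneg 0)
    fun v => norm_apply_le_singularValues_mul_norm (hn := rfl) (k := 0) (by simp))
  rcases Nat.eq_zero_or_pos (finrank 𝕜 E) with h0 | hpos
  · rw [T.singularValues_of_finrank_le h0.le]
    exact norm_nonneg _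
  set b := T.rightSingularVectors rfl
  have hb : ∀ i : Fin (finrank 𝕜 E), 0 < (i : ℕ) → ⟪b i, b ⟨0, hpos⟩⟫_𝕜 = 0 := fun i hi =>
    b.orthonormal.2 (Fin.ne_of_gt hi)
  calc T.singularValues 0 = T.singularValues 0 * ‖b ⟨0, hpos⟩‖ := by rw [b.norm_eq_one, mul_one]
    _ ≤ ‖T (b ⟨0, hpos⟩)‖ := singularValues_mul_norm_le_norm_apply hb
    _ ≤ ‖LinearMap.toContinuousLinearMap T‖ := by
      simpa [b.norm_eq_one] using (LinearMap.toContinuousLinearMap T).le_opNorm (b ⟨0, hpos⟩)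

end LinearMap

theorem sval_succ_eq_singularValues {n m : ℕ} (A : Matrix (Fin n) (Fin m) ℝ) (j : ℕ) :
    sval A (j + 1) = (toEuclideanLin A).singularValues j := by
  set T := toEuclideanLin A
  by_cases hj : j < m
  swap
  · rw [sval, if_neg (by omega), T.singularValues_of_finrank_le (by simpa using hj)]
  have hT : toEuclideanLin (Aᵀ * A) = LinearMap.adjoint T ∘ₗ T := by
    rw [toLpLin_mul_same, ← conjTranspose_eq_transpose_of_trivial,
      toEuclideanLin_conjTranspose_eq_adjoint]
  have hmultiset : ∀ h : (Aᵀ * A).IsHermitian, Finset.univ.val.map (fun i => √(h.eigenvalues i)) =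
      (Multiset.range m).map T.singularValues := by
    intro h
    have heig : ∀ i, h.eigenvalues₀ i = T.isSymmetric_adjoint_comp_self.eigenvalues
        finrank_euclideanSpace i := by
      intro i
      simp only [IsHermitian.eigenvalues₀, hT]
    calc Finset.univ.val.map (fun i => √(h.eigenvalues i))
        = Finset.univ.val.map (fun i => √(h.eigenvalues₀ i)) := by
          rw [← Multiset.map_univ_val_equiv (Fintype.equivOfCardEq (Fintype.card_fin _)),
            Multiset.map_map]
          simp only [Function.comp_def, IsHermitian.eigenvalues, Equiv.symm_apply_apply]
      _ = Finset.univ.val.map (fun i : Fin (Fintype.card (Fin m)) => T.singularValues i) := by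
          simp only [heig, T.singularValues_fin finrank_euclideanSpace]
      _ = (Multiset.range m).map T.singularValues := by
          rw [Fin.univ_val_map, List.ofFn_eq_map,
            show (fun i : Fin _ => T.singularValues i) = T.singularValues ∘ Fin.val from rfl,
            ← List.map_map, List.map_coe_finRange_eq_range, Fintype.card_fin]
          rfl
  rw [sval, if_pos ⟨by omega, by omega⟩, hmultiset,
    Multiset.getD_sort_map_range_of_antitone T.singularValues_antitone hj 0]

theorem sval_succ_antitone {n m : ℕ} (A : Matrix (Fin n) (Fin m) ℝ) :
    Antitone fun j => sval A (j + 1) := by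
  simpa only [sval_succ_eq_singularValues] using (toEuclideanLin A).singularValues_antitone

theorem matSpectralNorm_eq_l2_opNorm {n m : ℕ} (A : Matrix (Fin n) (Fin m) ℝ) :
    matSpectralNorm A = ‖A‖ := by
  rw [matSpectralNorm, sval_succ_eq_singularValues A 0, LinearMap.singularValues_zero_eq_opNorm]
  rfl

theorem sval_succ_le_add_l2_opNorm_sub {n m : ℕ} (A B : Matrix (Fin n) (Fin m) ℝ) (j : ℕ) :
    sval A (j + 1) ≤ sval B (j + 1) + ‖B - A‖ := by
  rw [sval_succ_eq_singularValues, sval_succ_eq_singularValues]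
  refine LinearMap.singularValues_le_add_of_norm_sub_apply_le _ _ (norm_nonneg _) (fun v => ?_) j
  rw [← map_sub, norm_sub_rev B A]
  exact ((toEuclideanLin.trans LinearMap.toContinuousLinearMap) (A - B)).le_opNorm v

theorem two_mul_div_add_div_sq_le {σ σ' ε : ℝ} (hε0 : 0 ≤ ε) (hε : ε < σ / 12)
    (hσ : σ ≤ σ' + ε) : 2 * (ε / σ') + (ε / σ') ^ 2 ≤ 6 * ε / σ := by
  have hσpos : 0 < σ := by linarith
  have hσ'pos : 0 < σ' := by linarith
  have hδ0 : 0 ≤ ε / σ' := div_nonneg hε0 hσ'pos.le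
  have hδ1 : ε / σ' ≤ 1 := (div_le_one hσ'pos).mpr (by linarith)
  have hδ : ε / σ' ≤ 2 * ε / σ := by
    rw [div_le_div_iff₀ hσ'pos hσpos]
    nlinarith
  calc 2 * (ε / σ') + (ε / σ') ^ 2 ≤ 3 * (ε / σ') := by nlinarith
    _ ≤ 3 * (2 * ε / σ) := by gcongr
    _ = 6 * ε / σ := by ring

theorem abs_one_sub_sqrt_le_and_abs_one_sub_inv_sqrt_le {t c : ℝ} (hc : c ≤ 1 / 2)
    (ht : |1 - t| ≤ c) : |1 - √t| ≤ c ∧ |1 - (√t)⁻¹| ≤ 2 * c := by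
  have ht0 : 0 ≤ t := by linarith [(abs_le.mp ht).2]
  have hs : √t ^ 2 = t := Real.sq_sqrt ht0
  have hs0 : 0 ≤ √t := Real.sqrt_nonneg t
  have hsqrt : |1 - √t| ≤ c := by
    have hfactor : |1 - t| = |1 - √t| * (1 + √t) := by
      rw [← abs_of_nonneg (by positivity : 0 ≤ 1 + √t), ← abs_mul]
      congr 1
      linear_combination hs
    nlinarith [abs_nonneg (1 - √t)]
  refine ⟨hsqrt, ?_⟩
  have hs_half : 1 / 2 ≤ √t := by linarith [(abs_le.mp hsqrt).2]
  have hs_pos : 0 < √t := by linarith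
  rw [show 1 - (√t)⁻¹ = (√t - 1) / √t by field_simp, abs_div, abs_of_pos hs_pos,
    div_le_iff₀ hs_pos, abs_sub_comm]
  nlinarith [abs_nonneg (1 - √t)]

namespace Matrix

theorem transpose_mul_inv_mul_eq {R l m n : Type*} [CommRing R] [Fintype m] [Fintype n]
    [DecidableEq m] {U : Matrix n m R} {V : Matrix l m R} {D : Matrix m m R} {B : Matrix n l R}
    (hD : IsUnit D.det) (hDt : Dᵀ = D) (h : Bᵀ * U = V * D) : (U * D⁻¹)ᵀ * B = Vᵀ := by
  have hUB : Uᵀ * B = D * Vᵀ := by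
    simpa [transpose_mul, hDt] using congrArg transpose h
  rw [transpose_mul, transpose_nonsing_inv, hDt, Matrix.mul_assoc, hUB, ← Matrix.mul_assoc,
    nonsing_inv_mul _ hD, Matrix.one_mul]

variable {l m n : Type*} [Fintype l] [Fintype m] [Fintype n]

theorem l2_opNorm_transpose [DecidableEq m] [DecidableEq n] (A : Matrix m n ℝ) :
    ‖Aᵀ‖ = ‖A‖ := by
  rw [← conjTranspose_eq_transpose_of_trivial, l2_opNorm_conjTranspose]

theorem l2_opNorm_le_one_of_transpose_mul_self_eq_one [DecidableEq n] {U : Matrix m n ℝ}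
    (hU : Uᵀ * U = 1) : ‖U‖ ≤ 1 := by
  have h : ‖U‖ * ‖U‖ ≤ 1 := by
    rw [← l2_opNorm_conjTranspose_mul_self, conjTranspose_eq_transpose_of_trivial, hU,
      ← diagonal_one, l2_opNorm_diagonal]
    exact (pi_norm_le_iff_of_nonneg zero_le_one).mpr fun i => by simp
  nlinarith [norm_nonneg U]

theorem l2_opNorm_mul_inv_diagonal_le [DecidableEq n] {U : Matrix m n ℝ} (hU : Uᵀ * U = 1)
    {d : n → ℝ} {s : ℝ} (hs : 0 < s) (hd : ∀ i, s ≤ d i) : ‖U * (diagonal d)⁻¹‖ ≤ s⁻¹ := by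
  have hinv : (diagonal d)⁻¹ = diagonal d⁻¹ := by
    refine inv_eq_right_inv ?_
    rw [diagonal_mul_diagonal, ← diagonal_one]
    exact congrArg diagonal (funext fun i => mul_inv_cancel₀ (hs.trans_le (hd i)).ne')
  calc ‖U * (diagonal d)⁻¹‖ ≤ ‖U‖ * ‖diagonal d⁻¹‖ := hinv ▸ l2_opNorm_mul _ _
    _ ≤ 1 * s⁻¹ := by
      gcongr
      · exact l2_opNorm_le_one_of_transpose_mul_self_eq_one hU
      · rw [l2_opNorm_diagonal]
        refine (pi_norm_le_iff_of_nonneg (by positivity)).mpr fun i => ?_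
        rw [Pi.inv_apply, norm_inv, Real.norm_of_nonneg (hs.le.trans (hd i))]
        exact inv_anti₀ hs (hd i)
    _ = s⁻¹ := one_mul _

theorem l2_opNorm_one_sub_mul_transpose_le [DecidableEq m] [DecidableEq n]
    {V : Matrix m n ℝ} (hV : Vᵀ * V = 1) (F : Matrix n m ℝ) :
    ‖1 - (Vᵀ + F) * (Vᵀ + F)ᵀ‖ ≤ 2 * ‖F‖ + ‖F‖ ^ 2 := by
  have hexpand : 1 - (Vᵀ + F) * (Vᵀ + F)ᵀ = -(Vᵀ * Fᵀ + F * V + F * Fᵀ) := by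
    rw [transpose_add, transpose_transpose, Matrix.add_mul, Matrix.mul_add, Matrix.mul_add, hV]
    abel
  have hVn : ‖V‖ ≤ 1 := l2_opNorm_le_one_of_transpose_mul_self_eq_one hV
  rw [hexpand, norm_neg]
  calc ‖Vᵀ * Fᵀ + F * V + F * Fᵀ‖ ≤ ‖Vᵀ‖ * ‖Fᵀ‖ + ‖F‖ * ‖V‖ + ‖F‖ * ‖Fᵀ‖ := by
        refine norm_add₃_le.trans ?_
        gcongr <;> exact l2_opNorm_mul _ _
    _ ≤ 1 * ‖F‖ + ‖F‖ * 1 + ‖F‖ * ‖F‖ := by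
      rw [l2_opNorm_transpose, l2_opNorm_transpose]
      gcongr
    _ = 2 * ‖F‖ + ‖F‖ ^ 2 := by ring

theorem l2_opNorm_one_sub_gram_le [DecidableEq l] [DecidableEq m] [DecidableEq n]
    {A B : Matrix n l ℝ} {W : Matrix n m ℝ} {V : Matrix l m ℝ} (hV : Vᵀ * V = 1)
    (hWB : Wᵀ * B = Vᵀ) {s : ℝ} (hW : ‖W‖ ≤ s⁻¹) :
    ‖1 - (Wᵀ * A) * (Wᵀ * A)ᵀ‖ ≤ 2 * (‖B - A‖ / s) + (‖B - A‖ / s) ^ 2 := by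
  have hWA : Wᵀ * A = Vᵀ + Wᵀ * (A - B) := by
    rw [Matrix.mul_sub, hWB, add_sub_cancel]
  have hF : ‖Wᵀ * (A - B)‖ ≤ ‖B - A‖ / s :=
    calc ‖Wᵀ * (A - B)‖ ≤ ‖W‖ * ‖B - A‖ := by
          rw [← l2_opNorm_transpose W, norm_sub_rev B]
          exact l2_opNorm_mul _ _
      _ ≤ s⁻¹ * ‖B - A‖ := by gcongr
      _ = ‖B - A‖ / s := inv_mul_eq_div _ _
  rw [hWA]
  refine (l2_opNorm_one_sub_mul_transpose_le hV _).trans ?_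
  gcongr

end Matrix

namespace Matrix.IsHermitian

variable {𝕜 : Type*} [RCLike 𝕜] {n : Type*} [Fintype n] [DecidableEq n] {A : Matrix n n 𝕜}

theorem l2_opNorm_cfc (hA : A.IsHermitian) (f : ℝ → ℝ) : ‖cfc f A‖ = ‖f ∘ hA.eigenvalues‖ := by
  rw [hA.cfc_eq, IsHermitian.cfc, Unitary.conjStarAlgAut_apply, ← Unitary.coe_star,
    CStarRing.norm_mul_coe_unitary,
    CStarRing.norm_coe_unitary_mul, l2_opNorm_diagonal]
  simp [Pi.norm_def, Function.comp_def]

theorem norm_apply_eigenvalues_le (hA : A.IsHermitian) (f : ℝ → ℝ) (i : n) :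
    ‖f (hA.eigenvalues i)‖ ≤ ‖cfc f A‖ :=
  hA.l2_opNorm_cfc f ▸ norm_le_pi_norm (f ∘ hA.eigenvalues) i

theorem l2_opNorm_cfc_le (hA : A.IsHermitian) (f : ℝ → ℝ) {c : ℝ} (hc : 0 ≤ c)
    (h : ∀ i, |f (hA.eigenvalues i)| ≤ c) : ‖cfc f A‖ ≤ c :=
  hA.l2_opNorm_cfc f ▸ (pi_norm_le_iff_of_nonneg hc).mpr h

theorem one_sub_cfc (hA : A.IsHermitian) (f : ℝ → ℝ) : 1 - cfc f A = cfc (fun x => 1 - f x) A := by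
  rw [cfc_sub (fun _ => 1) f A (hg := A.finite_real_spectrum.continuousOn _), cfc_const_one ℝ A]

end Matrix.IsHermitian

theorem msqrt_eq_cfc {k : ℕ} {M : Matrix (Fin k) (Fin k) ℝ} (hM : M.PosSemidef) :
    msqrt M = cfc Real.sqrt M := by
  rw [msqrt, dif_pos hM, hM.1.cfc_eq, IsHermitian.cfc, Unitary.conjStarAlgAut_apply]
  rfl

theorem posDef_and_l2_opNorm_one_sub_msqrt_le {k : ℕ} {M : Matrix (Fin k) (Fin k) ℝ}
    (hM : M.IsHermitian) {c : ℝ} (hc : c ≤ 1 / 2) (h : ‖1 - M‖ ≤ c) :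
    M.PosDef ∧ ‖1 - msqrt M‖ ≤ c ∧ ‖1 - (msqrt M)⁻¹‖ ≤ 2 * c := by
  have hc0 : 0 ≤ c := (norm_nonneg _).trans h
  have heig : ∀ i, |1 - hM.eigenvalues i| ≤ c := fun i => by
    have := hM.norm_apply_eigenvalues_le (fun x => 1 - x) i
    rw [← hM.one_sub_cfc, cfc_id' ℝ M, Real.norm_eq_abs] at this
    exact this.trans h
  have hpos : ∀ i, 0 < hM.eigenvalues i := fun i => by linarith [(abs_le.mp (heig i)).2]
  have hPD : M.PosDef := hM.posDef_iff_eigenvalues_pos.mpr hpos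
  have hscalar := fun i => abs_one_sub_sqrt_le_and_abs_one_sub_inv_sqrt_le hc (heig i)
  have hinv : (msqrt M)⁻¹ = cfc (fun x => (√x)⁻¹) M := by
    rw [msqrt_eq_cfc hPD.posSemidef, nonsing_inv_eq_ringInverse, cfc_inv Real.sqrt M]
    rw [hM.spectrum_real_eq_range_eigenvalues]
    rintro _ ⟨i, rfl⟩
    exact (Real.sqrt_pos.mpr (hpos i)).ne'
  refine ⟨hPD, ?_, ?_⟩
  · rw [msqrt_eq_cfc hPD.posSemidef, hM.one_sub_cfc]
    exact hM.l2_opNorm_cfc_le _ hc0 fun i => (hscalar i).1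
  · rw [hinv, hM.one_sub_cfc]
    exact hM.l2_opNorm_cfc_le _ (by linarith) fun i => (hscalar i).2

theorem whitened_gram_sqrt_close_to_identity_general
    {n m k : ℕ}
    (A Ahat : Matrix (Fin n) (Fin m) ℝ) (ε : ℝ)
    (hpert : matSpectralNorm (Ahat - A) ≤ ε) (hε : ε < sval A k / 12)
    (Uhat : Matrix (Fin n) (Fin k) ℝ) (Vhat : Matrix (Fin m) (Fin k) ℝ)
    (Dhat : Matrix (Fin k) (Fin k) ℝ)
    (hU : Uhatᵀ * Uhat = 1) (hV : Vhatᵀ * Vhat = 1)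
    (hD : Dhat = Matrix.diagonal fun i : Fin k => sval Ahat (i.val + 1))
    (hAU : Ahatᵀ * Uhat = Vhat * Dhat)
    (What : Matrix (Fin n) (Fin k) ℝ) (hW : What = Uhat * Dhat⁻¹)
    (M : Matrix (Fin k) (Fin k) ℝ) (hM : M = Whatᵀ * A * Aᵀ * What) :
    M.PosDef ∧
      matSpectralNorm ((1 : Matrix (Fin k) (Fin k) ℝ) - msqrt M) ≤ 6 * ε / sval A k ∧
      matSpectralNorm ((1 : Matrix (Fin k) (Fin k) ℝ) - (msqrt M)⁻¹) ≤ 12 * ε / sval A k := by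
  simp only [matSpectralNorm_eq_l2_opNorm] at hpert ⊢
  have hε0 : 0 ≤ ε := (norm_nonneg _).trans hpert
  obtain ⟨j, rfl⟩ : ∃ j, k = j + 1 :=
    Nat.exists_eq_add_one.mpr (Nat.pos_of_ne_zero fun h => by simp [h, sval] at hε; linarith)
  have hweyl : sval A (j + 1) ≤ sval Ahat (j + 1) + ε :=
    (sval_succ_le_add_l2_opNorm_sub A Ahat j).trans (by linarith)
  have hσ' : 0 < sval Ahat (j + 1) := by linarith
  have hd : ∀ i : Fin (j + 1), sval Ahat (j + 1) ≤ sval Ahat (i + 1) := fun i =>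
    sval_succ_antitone Ahat (Nat.lt_succ_iff.mp i.2)
  have hDunit : IsUnit Dhat.det := by
    rw [hD, det_diagonal]
    exact (Finset.prod_pos fun i _ => hσ'.trans_le (hd i)).ne'.isUnit
  have hWAhat : Whatᵀ * Ahat = Vhatᵀ :=
    hW ▸ transpose_mul_inv_mul_eq hDunit (by rw [hD, diagonal_transpose]) hAU
  have hWnorm : ‖What‖ ≤ (sval Ahat (j + 1))⁻¹ := hW ▸ hD ▸ l2_opNorm_mul_inv_diagonal_le hU hσ' hd
  have hMgram : M = (Whatᵀ * A) * (Whatᵀ * A)ᵀ := by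
    rw [hM, transpose_mul, transpose_transpose]
    simp only [Matrix.mul_assoc]
  have hgram : ‖1 - M‖ ≤ 6 * ε / sval A (j + 1) := by
    rw [hMgram]
    refine (l2_opNorm_one_sub_gram_le hV hWAhat hWnorm).trans
      (le_trans ?_ (two_mul_div_add_div_sq_le hε0 hε hweyl))
    gcongr
  obtain ⟨hPD, hsqrt, hinv⟩ := posDef_and_l2_opNorm_one_sub_msqrt_le
    (hMgram ▸ isHermitian_mul_conjTranspose_self _)
    (by rw [div_le_iff₀ (by linarith)]; linarith) hgram
  exact ⟨hPD, hsqrt, hinv.trans_eq (by ring)⟩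

/-- Under the same hypotheses as Statement 0, the matrix
`M = Ŵᵀ A Aᵀ Ŵ` is symmetric positive definite, `‖I_k − M^{1/2}‖ ≤ 6 ε / σ_k(A)` and
`‖I_k − M^{−1/2}‖ ≤ 12 ε / σ_k(A)`. -/
theorem whitened_gram_sqrt_close_to_identity
    {n m k : ℕ} (hk : k ≤ min n m)
    (A Ahat : Matrix (Fin n) (Fin m) ℝ) (ε : ℝ)
    (hpert : matSpectralNorm (Ahat - A) ≤ ε) (hε : ε < sval A k / 12)
    (Uhat : Matrix (Fin n) (Fin k) ℝ) (Vhat : Matrix (Fin m) (Fin k) ℝ)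
    (Dhat : Matrix (Fin k) (Fin k) ℝ)
    (hU : Uhatᵀ * Uhat = 1) (hV : Vhatᵀ * Vhat = 1)
    (hD : Dhat = Matrix.diagonal fun i : Fin k => sval Ahat (i.val + 1))
    (hAV : Ahat * Vhat = Uhat * Dhat) (hAU : Ahatᵀ * Uhat = Vhat * Dhat)
    (What : Matrix (Fin n) (Fin k) ℝ) (hW : What = Uhat * Dhat⁻¹)
    (M : Matrix (Fin k) (Fin k) ℝ) (hM : M = Whatᵀ * A * Aᵀ * What) :
    M.PosDef ∧
      matSpectralNorm ((1 : Matrix (Fin k) (Fin k) ℝ) - msqrt M) ≤ 6 * ε / sval A k ∧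
      matSpectralNorm ((1 : Matrix (Fin k) (Fin k) ℝ) - (msqrt M)⁻¹) ≤ 12 * ε / sval A k :=
  whitened_gram_sqrt_close_to_identity_general A Ahat ε hpert hε Uhat Vhat Dhat hU hV hD hAU What hW
    M hM
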